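/- arXiv:1512.05992 — 3 statements merged into one kernel-verified Lean document; each statement's English description precedes it below -/
import Mathlib

section
/- Let n ≥ 1 and let x be a point of the unit sphere S^n ⊂ ℝ^{n+1}. For each i ∈ {1, …, n+1}, let θ^i ∈ ℝ^{n+1} be defined as follows: if e_i − x_i x ≠ 0 then θ^i = (e_i − x_i x)/‖e_i − x_i x‖, and otherwise θ^i is an arbitrary unit vector orthogonal to x. Then for every y ∈ ℝ^{n+1} with ⟨x, y⟩ = 0 one has ∑_{i=1}^{n+1} ⟨θ^i, y⟩^2 ≤ 2‖y‖^2. -/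
open scoped RealInnerProductSpace BigOperators

private lemma aux_real_ineq (t c yi xi Y : ℝ) (ht : 0 < t) (hct : c * t = 1)
    (ht2 : t ^ 2 = 1 - xi ^ 2) (h4 : yi ^ 2 ≤ (1 - xi ^ 2) * Y) :
    (c * yi) ^ 2 ≤ yi ^ 2 + xi ^ 2 * Y := by
  have hc2 : c ^ 2 * t ^ 2 = 1 := by rw [← mul_pow, hct, one_pow]
  have hkey : xi ^ 2 * ((1 - xi ^ 2) * Y - yi ^ 2) ≥ 0 :=
    mul_nonneg (sq_nonneg xi) (by linarith)
  nlinarith [sq_nonneg t, sq_nonneg c, mul_pos ht ht, sq_nonneg (c * yi), sq_nonneg yi]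

/-- Lemma (frame inequality on the sphere): let `x ∈ S^n ⊂ ℝ^{n+1}` and, for each
coordinate `i`, let `θ i` be the normalization of the spherical gradient
`e_i − x_i x` when it is nonzero, and an arbitrary unit vector orthogonal to `x`
otherwise. Then for every `y ⊥ x` one has `∑_i ⟨θ^i, y⟩² ≤ 2‖y‖²`. -/
theorem sum_inner_frame_sq_le (n : ℕ) (hn : 1 ≤ n)
    (x : EuclideanSpace ℝ (Fin (n + 1))) (hx : ‖x‖ = 1)
    (θ : Fin (n + 1) → EuclideanSpace ℝ (Fin (n + 1)))
    (hθ : ∀ i, EuclideanSpace.single i (1 : ℝ) - x i • x ≠ 0 →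
      θ i = ‖EuclideanSpace.single i (1 : ℝ) - x i • x‖⁻¹ •
        (EuclideanSpace.single i (1 : ℝ) - x i • x))
    (hθ' : ∀ i, EuclideanSpace.single i (1 : ℝ) - x i • x = 0 →
      ‖θ i‖ = 1 ∧ ⟪x, θ i⟫ = 0)
    (y : EuclideanSpace ℝ (Fin (n + 1))) (hy : ⟪x, y⟫ = 0) :
    ∑ i, ⟪θ i, y⟫ ^ 2 ≤ 2 * ‖y‖ ^ 2 := by
  have hx2 : ∑ i, x i ^ 2 = 1 := by
    have h := real_inner_self_eq_norm_sq x
    rw [hx, one_pow] at h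
    simp only [PiLp.inner_apply, RCLike.inner_apply, conj_trivial] at h
    rw [← h]
    exact Finset.sum_congr rfl (fun i _ => pow_two (x i))
  have hy2 : ∑ i, y i ^ 2 = ‖y‖ ^ 2 := by
    have h := real_inner_self_eq_norm_sq y
    simp only [PiLp.inner_apply, RCLike.inner_apply, conj_trivial] at h
    rw [← h]
    exact Finset.sum_congr rfl (fun i _ => pow_two (y i))
  -- key per-index bound
  have key : ∀ i, ⟪θ i, y⟫ ^ 2 ≤ y i ^ 2 + x i ^ 2 * ‖y‖ ^ 2 := by
    intro i
    have hxi : ⟪x, (EuclideanSpace.single i (1 : ℝ) : EuclideanSpace ℝ (Fin (n+1)))⟫ = x i := by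
      rw [EuclideanSpace.inner_single_right]; simp
    have hxi' : ⟪(EuclideanSpace.single i (1 : ℝ) : EuclideanSpace ℝ (Fin (n+1))), x⟫ = x i := by
      rw [EuclideanSpace.inner_single_left]; simp
    have hyi : ⟪(EuclideanSpace.single i (1 : ℝ) : EuclideanSpace ℝ (Fin (n+1))), y⟫ = y i := by
      rw [EuclideanSpace.inner_single_left]; simp
    have hyi' : ⟪y, (EuclideanSpace.single i (1 : ℝ) : EuclideanSpace ℝ (Fin (n+1)))⟫ = y i := by
      rw [EuclideanSpace.inner_single_right]; simp
    have hee : ⟪(EuclideanSpace.single i (1 : ℝ) : EuclideanSpace ℝ (Fin (n+1))),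
        EuclideanSpace.single i (1 : ℝ)⟫ = 1 := by
      rw [EuclideanSpace.inner_single_left]; simp
    have hcs := abs_real_inner_le_norm
      (x - x i • EuclideanSpace.single i (1 : ℝ))
      (y - y i • EuclideanSpace.single i (1 : ℝ))
    have hinner : ⟪x - x i • EuclideanSpace.single i (1 : ℝ),
        y - y i • EuclideanSpace.single i (1 : ℝ)⟫ = -(x i * y i) := by
      rw [inner_sub_left, inner_sub_right, inner_sub_right, real_inner_smul_right,
        real_inner_smul_left, real_inner_smul_left, real_inner_smul_right,
        hy, hxi, hyi, hee]
      ring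
    have hna : ‖x - x i • EuclideanSpace.single i (1 : ℝ)‖ ^ 2 = 1 - x i ^ 2 := by
      rw [norm_sub_sq_real, hx, norm_smul, EuclideanSpace.norm_single,
        real_inner_smul_right, hxi]
      simp only [Real.norm_eq_abs, norm_one, mul_one, mul_pow, sq_abs, one_pow]
      ring
    have hnb : ‖y - y i • EuclideanSpace.single i (1 : ℝ)‖ ^ 2 = ‖y‖ ^ 2 - y i ^ 2 := by
      rw [norm_sub_sq_real, norm_smul, EuclideanSpace.norm_single,
        real_inner_smul_right, hyi']
      simp only [Real.norm_eq_abs, norm_one, mul_one, mul_pow, sq_abs, one_pow]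
      ring
    rw [hinner] at hcs
    have hcs2 : (x i * y i) ^ 2 ≤ (1 - x i ^ 2) * (‖y‖ ^ 2 - y i ^ 2) := by
      have h2 := pow_le_pow_left₀ (abs_nonneg (-(x i * y i))) hcs 2
      rw [sq_abs] at h2
      calc (x i * y i) ^ 2 = (-(x i * y i)) ^ 2 := by ring
        _ ≤ (‖x - x i • EuclideanSpace.single i (1 : ℝ)‖ *
              ‖y - y i • EuclideanSpace.single i (1 : ℝ)‖) ^ 2 := h2
        _ = (1 - x i ^ 2) * (‖y‖ ^ 2 - y i ^ 2) := by rw [mul_pow, hna, hnb]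
    have hkey2 : y i ^ 2 ≤ (1 - x i ^ 2) * ‖y‖ ^ 2 := by nlinarith [sq_nonneg (x i * y i)]
    by_cases hv : EuclideanSpace.single i (1 : ℝ) - x i • x = 0
    · -- degenerate index: x i ^ 2 = 1 and |⟪θ i, y⟫| ≤ ‖y‖
      obtain ⟨hθn, -⟩ := hθ' i hv
      have h1 : |⟪θ i, y⟫| ≤ ‖y‖ := by
        have := abs_real_inner_le_norm (θ i) y
        rwa [hθn, one_mul] at this
      have hxi1 : x i ^ 2 = 1 := by
        have heq : EuclideanSpace.single i (1 : ℝ) = x i • x := sub_eq_zero.mp hv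
        have hnn := congrArg norm heq
        rw [EuclideanSpace.norm_single, norm_smul, hx, mul_one, norm_one,
          Real.norm_eq_abs] at hnn
        rw [← sq_abs, ← hnn]; norm_num
      have h2 : ⟪θ i, y⟫ ^ 2 ≤ ‖y‖ ^ 2 := by
        rw [← sq_abs]
        exact pow_le_pow_left₀ (abs_nonneg _) h1 2
      rw [hxi1]
      nlinarith [sq_nonneg (y i)]
    · rw [hθ i hv, real_inner_smul_left, inner_sub_left, real_inner_smul_left, hyi, hy,
        mul_zero, sub_zero]
      have hvpos : 0 < ‖EuclideanSpace.single i (1 : ℝ) - x i • x‖ := norm_pos_iff.mpr hv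
      have hvn : ‖EuclideanSpace.single i (1 : ℝ) - x i • x‖ ^ 2 = 1 - x i ^ 2 := by
        rw [norm_sub_sq_real, EuclideanSpace.norm_single, norm_smul, hx, mul_one,
          real_inner_smul_right, hxi']
        simp only [Real.norm_eq_abs, norm_one, sq_abs, one_pow]
        ring
      exact aux_real_ineq _ _ _ _ _ hvpos
        (inv_mul_cancel₀ hvpos.ne') hvn hkey2
  calc ∑ i, ⟪θ i, y⟫ ^ 2 ≤ ∑ i, (y i ^ 2 + x i ^ 2 * ‖y‖ ^ 2) :=
        Finset.sum_le_sum (fun i _ => key i)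
    _ = 2 * ‖y‖ ^ 2 := by
        rw [Finset.sum_add_distrib, ← Finset.sum_mul, hx2, hy2]; ring
end

section
/- Let n > 0 and κ > 0 be real numbers, let T > 0, and let α : [0,T] → ℝ be a nonnegative differentiable function satisfying α'(t) ≥ κ·α(t) + α(t)²/n for all t ∈ [0,T]. Then for every t ∈ [0,T], α(t) ≤ n·κ·α(T) / ( e^{κ(T−t)}·(n·κ + α(T)) − α(T) ). (Note that the denominator is at least n·κ > 0, so the bound is well defined.) -/
/-!
Put `c = n κ`. The quantity `g(t) = e^{κ(T-t)} α(t) / (c + α(t))` is nondecreasing, since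
`g' = e^{κ(T-t)} (c α' - κ α (c + α)) / (c + α)²` and the differential inequality multiplied by
`n κ` is exactly `κ α (c + α) ≤ c α'`. The bound is `g(t) ≤ g(T)` solved for `α(t)`.
-/

open Set Real

theorem HasDerivWithinAt.exp_mul_div_add {α : ℝ → ℝ} {a : ℝ} {D : Set ℝ} {t : ℝ}
    (hα : HasDerivWithinAt α a D t) (κ c s : ℝ) (hden : c + α t ≠ 0) :
    HasDerivWithinAt (fun t => Real.exp (κ * (s - t)) * α t / (c + α t))
      (Real.exp (κ * (s - t)) * (c * a - κ * α t * (c + α t)) / (c + α t) ^ 2) D t := by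
  have hexp : HasDerivWithinAt (fun t => Real.exp (κ * (s - t)))
      (-κ * Real.exp (κ * (s - t))) D t :=
    (((hasDerivAt_id t).const_sub s).const_mul κ).exp.hasDerivWithinAt.congr_deriv
      (by simp only [id]; ring)
  refine ((hexp.mul hα).div (hα.const_add c) hden).congr_deriv ?_
  simp only [Pi.mul_apply]
  field_simp
  ring

theorem monotoneOn_exp_mul_div_add {D : Set ℝ} (hD : Convex ℝ D) {α α' : ℝ → ℝ} {κ c : ℝ}
    (s : ℝ) (hderiv : ∀ t ∈ D, HasDerivWithinAt α (α' t) D t)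
    (hden : ∀ t ∈ D, 0 < c + α t) (hineq : ∀ t ∈ D, κ * α t * (c + α t) ≤ c * α' t) :
    MonotoneOn (fun t => exp (κ * (s - t)) * α t / (c + α t)) D := by
  have hg (t) (ht : t ∈ D) := (hderiv t ht).exp_mul_div_add κ c s (hden t ht).ne'
  refine monotoneOn_of_hasDerivWithinAt_nonneg hD
    (fun t ht => (hg t ht).continuousWithinAt)
    (fun t ht => (hg t (interior_subset ht)).mono interior_subset) fun t ht => ?_
  have ht := interior_subset ht
  exact div_nonneg (mul_nonneg (exp_pos _).le (sub_nonneg.2 (hineq t ht))) (sq_nonneg _)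

theorem le_div_of_mul_div_add_le_div_add {c x y E : ℝ} (hc : 0 < c) (hx : 0 ≤ x) (hy : 0 ≤ y)
    (hE : 1 ≤ E) (h : E * x / (c + x) ≤ y / (c + y)) : x ≤ c * y / (E * (c + y) - y) := by
  have hden : c ≤ E * (c + y) - y := by nlinarith
  rw [le_div_iff₀ (hc.trans_le hden)]
  rw [div_le_div_iff₀ (by linarith) (by linarith)] at h
  linarith

theorem ode_comparison_bound_general (n κ T : ℝ) (hn : 0 < n) (hκ : 0 < κ)
    (α α' : ℝ → ℝ)
    (hderiv : ∀ t ∈ Icc 0 T, HasDerivWithinAt α (α' t) (Icc 0 T) t)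
    (hpos : ∀ t ∈ Icc 0 T, 0 ≤ α t)
    (hineq : ∀ t ∈ Icc 0 T, κ * α t + (α t) ^ 2 / n ≤ α' t) :
    ∀ t ∈ Icc 0 T,
      α t ≤ n * κ * α T / (Real.exp (κ * (T - t)) * (n * κ + α T) - α T) := by
  intro t ht
  have hnκ : 0 < n * κ := mul_pos hn hκ
  have hT : T ∈ Icc 0 T := right_mem_Icc.2 (ht.1.trans ht.2)
  have hineq_scaled (s) (hs : s ∈ Icc 0 T) : κ * α s * (n * κ + α s) ≤ n * κ * α' s := by
    calc κ * α s * (n * κ + α s) = n * κ * (κ * α s + α s ^ 2 / n) := by field_simp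
      _ ≤ n * κ * α' s := mul_le_mul_of_nonneg_left (hineq s hs) hnκ.le
  have hmono := monotoneOn_exp_mul_div_add (convex_Icc 0 T) T hderiv
    (fun s hs => add_pos_of_pos_of_nonneg hnκ (hpos s hs)) hineq_scaled
  have hle := hmono ht hT ht.2
  simp only [sub_self, mul_zero, exp_zero, one_mul] at hle
  exact le_div_of_mul_div_add_le_div_add hnκ (hpos t ht) (hpos T hT)
    (one_le_exp (mul_nonneg hκ.le (sub_nonneg.2 ht.2))) hle

/-- A Gronwall-type bound: if `α ≥ 0` is differentiable on `[0,T]` (one-sided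
derivatives at the endpoints) and satisfies `α' ≥ κ·α + α²/n`, then for `t ∈ [0,T]`,
`α(t) ≤ n·κ·α(T) / ( e^{κ(T−t)}·(n·κ + α(T)) − α(T) )`. -/
theorem ode_comparison_bound (n κ T : ℝ) (hn : 0 < n) (hκ : 0 < κ) (hT : 0 < T)
    (α α' : ℝ → ℝ)
    (hderiv : ∀ t ∈ Icc 0 T, HasDerivWithinAt α (α' t) (Icc 0 T) t)
    (hpos : ∀ t ∈ Icc 0 T, 0 ≤ α t)
    (hineq : ∀ t ∈ Icc 0 T, κ * α t + (α t) ^ 2 / n ≤ α' t) :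
    ∀ t ∈ Icc 0 T,
      α t ≤ n * κ * α T / (Real.exp (κ * (T - t)) * (n * κ + α T) - α T) :=
  ode_comparison_bound_general n κ T hn hκ α α' hderiv hpos hineq
end

section
/- Let n > 0 and κ > 0 be real numbers, let T > 0, and let α : [0,T] → ℝ be a nonnegative differentiable function satisfying α'(t) ≥ κ·α(t) + α(t)²/n for all t ∈ [0,T]. Then ∫_0^T α(t) dt ≤ n · log( 1 + α(T)·(1 − e^{−κT}) / (n·κ) ). -/
/-!
With `E(t) = 1 - e^{-κt}`, the potential `ψ(t) = n log(nκ + α(t) E(t))` dominates `α` in the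
sense that `α ≤ ψ'`: clearing the denominator, this is `E (n α' - nκ α - α²) ≥ 0`.
Integrating, `∫₀ᵀ α ≤ ψ(T) - ψ(0)`, which is the claimed bound since `E(0) = 0`.
-/

open Set Real

lemma le_div_of_riccati_ineq {n κ a a' e : ℝ} (hn : 0 < n) (hκ : 0 < κ) (ha : 0 ≤ a)
    (he : e ≤ 1) (hineq : κ * a + a ^ 2 / n ≤ a') :
    a ≤ n * (a' * (1 - e) + a * (κ * e)) / (n * κ + a * (1 - e)) := by
  have hE : 0 ≤ 1 - e := sub_nonneg.2 he
  have hineq' : n * κ * a + a ^ 2 ≤ n * a' := by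
    have := mul_le_mul_of_nonneg_left hineq hn.le
    rwa [mul_add, mul_div_cancel₀ _ hn.ne', ← mul_assoc] at this
  rw [le_div_iff₀ (by positivity)]
  nlinarith [mul_le_mul_of_nonneg_left hineq' hE]

lemma hasDerivAt_mul_log_add_mul_one_sub_exp {α : ℝ → ℝ} {a' t : ℝ} (n c κ : ℝ)
    (hα : HasDerivAt α a' t) (hpos : c + α t * (1 - exp (-κ * t)) ≠ 0) :
    HasDerivAt (fun s => n * log (c + α s * (1 - exp (-κ * s))))
      (n * (a' * (1 - exp (-κ * t)) + α t * (κ * exp (-κ * t))) /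
        (c + α t * (1 - exp (-κ * t)))) t := by
  have hE : HasDerivAt (fun s => 1 - exp (-κ * s)) (κ * exp (-κ * t)) t := by
    simpa [mul_comm] using (((hasDerivAt_id t).const_mul (-κ)).exp).const_sub 1
  exact ((((hα.fun_mul hE).const_add c).log hpos).const_mul n).congr_deriv (mul_div_assoc ..).symm

/-- If `α ≥ 0` is differentiable on `[0,T]` (one-sided derivatives at the endpoints)
and satisfies `α' ≥ κ·α + α²/n`, then
`∫_0^T α(t) dt ≤ n · log(1 + α(T)(1 − e^{−κT})/(nκ))`. -/
theorem ode_comparison_integral_bound (n κ T : ℝ) (hn : 0 < n) (hκ : 0 < κ) (hT : 0 < T)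
    (α α' : ℝ → ℝ)
    (hderiv : ∀ t ∈ Icc 0 T, HasDerivWithinAt α (α' t) (Icc 0 T) t)
    (hpos : ∀ t ∈ Icc 0 T, 0 ≤ α t)
    (hineq : ∀ t ∈ Icc 0 T, κ * α t + (α t) ^ 2 / n ≤ α' t) :
    ∫ t in (0 : ℝ)..T, α t ≤
      n * Real.log (1 + α T * (1 - Real.exp (-κ * T)) / (n * κ)) := by
  have hnκ : 0 < n * κ := mul_pos hn hκ
  have hexp_le : ∀ t ∈ Icc 0 T, exp (-κ * t) ≤ 1 := fun t ht =>
    exp_le_one_iff.2 (by nlinarith [ht.1])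
  have harg : ∀ t ∈ Icc 0 T, 0 < n * κ + α t * (1 - exp (-κ * t)) := fun t ht =>
    add_pos_of_pos_of_nonneg hnκ (mul_nonneg (hpos t ht) (sub_nonneg.2 (hexp_le t ht)))
  have hcont : ContinuousOn α (Icc 0 T) := fun t ht => (hderiv t ht).continuousWithinAt
  set ψ : ℝ → ℝ := fun t => n * log (n * κ + α t * (1 - exp (-κ * t)))
  have hψcont : ContinuousOn ψ (Icc 0 T) :=
    continuousOn_const.mul ((continuousOn_const.add (hcont.mul (by fun_prop))).log
      fun t ht => (harg t ht).ne')
  have hψderiv (t : ℝ) (ht : t ∈ Ioo 0 T) := hasDerivAt_mul_log_add_mul_one_sub_exp n (n * κ) κ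
    ((hderiv t (Ioo_subset_Icc_self ht)).hasDerivAt (Icc_mem_nhds ht.1 ht.2))
    (harg t (Ioo_subset_Icc_self ht)).ne'
  have hintegral_le : ∫ t in (0 : ℝ)..T, α t ≤ ψ T - ψ 0 :=
    intervalIntegral.integral_le_sub_of_hasDeriv_right_of_le hT.le hψcont
      (fun t ht => (hψderiv t ht).hasDerivWithinAt) hcont.integrableOn_Icc
      (fun t ht => le_div_of_riccati_ineq hn hκ (hpos t (Ioo_subset_Icc_self ht))
        (hexp_le t (Ioo_subset_Icc_self ht)) (hineq t (Ioo_subset_Icc_self ht)))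
  convert hintegral_le using 1
  simp only [ψ, mul_zero, exp_zero, sub_self, add_zero]
  rw [← mul_sub, ← log_div (harg T ⟨hT.le, le_rfl⟩).ne' hnκ.ne']
  congr 2
  field_simp
end
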